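/- Let (X, ρ) be a compact metric space and h : X → X a homeomorphism. Suppose there exist ε > 0, C > 0 and λ ∈ (0,1) such that h satisfies (AH1) with constants (ε, C, λ). Then there exist a metric ρ̃ on X inducing the same topology as ρ, together with ε̃ > 0 and λ̃ ∈ (0,1), such that h satisfies (AH1) with respect to ρ̃ with constants (ε̃, 1, λ̃), i.e. the contraction estimates hold with constant C = 1. -/

import Mathlib

/-!
The adapted metric is `d'(x, y) = ∑_{|n| ≤ N} σ^|n| d(hⁿx, hⁿy)` with `lam < σ < 1`.
In `d'(hx, hy)` the summands with `n < 0` are `σ` times summands of `d'(x, y)`, because their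
distances sit one step closer to the present there. The remaining `N + 1` summands, distances at
times `1, …, N + 1`, are controlled by the (AH1) estimate started at time `-N`: it applies because
a pair that is `d'`-stable at scale `σ^N ε` is `d`-stable at scale `ε` from time `-N` on, and it
bounds each of them by `C lam^(N+1) / σ^N` times the summand `σ^N d(h⁻ᴺx, h⁻ᴺy) ≤ d'(x, y)`.
Hence `d'(hx, hy) ≤ (σ + (N + 1) C lam^(N+1) / σ^N) d'(x, y)`, a factor below `1` for large `N`.
The weights are symmetric in time, so `d'` is also the metric built from `h⁻¹`, and the unstable
estimate is the stable one for `h⁻¹`. The weight of the present is `1`, so `d ≤ d'`; together with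
the continuity of `d'` this shows that both metrics have the same neighbourhoods.
-/

/-- The local stable set `W^s_d(x, ε)` of a map `h` with respect to a distance
function `d`: the set of points `y` such that `d(hⁿx, hⁿy) ≤ ε` for all `n ≥ 0`.
(The local unstable set of `h` is the local stable set of `h⁻¹`.) -/
def localStableSet {X : Type*} (d : X → X → ℝ) (h : X → X) (ε : ℝ) (x : X) :
    Set X :=
  {y | ∀ n : ℕ, d (h^[n] x) (h^[n] y) ≤ ε}

/-- Condition (AH1) for a homeomorphism with iterate map `h` and inverse `hinv`,
with respect to a distance function `d` and constants `(ε, C, lam)`: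
points in a local stable set contract at rate `C·lamⁿ` in forward time, and points
in a local unstable set contract at rate `C·lamⁿ` in backward time. -/
def SatisfiesAH1 {X : Type*} (d : X → X → ℝ) (h hinv : X → X)
    (ε C lam : ℝ) : Prop :=
  (∀ x y, y ∈ localStableSet d h ε x →
    ∀ n : ℕ, d (h^[n] x) (h^[n] y) ≤ C * lam ^ n * d x y) ∧
  (∀ x y, y ∈ localStableSet d hinv ε x →
    ∀ n : ℕ, d (hinv^[n] x) (hinv^[n] y) ≤ C * lam ^ n * d x y)

open Filter Topology Finset

namespace Homeomorph

variable {X : Type*} [TopologicalSpace X]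

lemma coe_pow (h : X ≃ₜ X) (n : ℕ) : ⇑(h ^ n) = (⇑h)^[n] := by
  induction n with
  | zero => rfl
  | succ n ih => ext x; rw [pow_succ, mul_apply, ih, Function.iterate_succ_apply]

lemma iterate_zpow_apply (h : X ≃ₜ X) (m : ℕ) (n : ℤ) (x : X) :
    (⇑h)^[m] ((h ^ n) x) = (h ^ (m + n)) x := by
  rw [← coe_pow, ← mul_apply, ← zpow_natCast, ← zpow_add]

lemma zpow_iterate_apply (h : X ≃ₜ X) (m : ℕ) (n : ℤ) (x : X) :
    (h ^ n) ((⇑h)^[m] x) = (h ^ (m + n)) x := by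
  rw [← coe_pow, ← mul_apply, ← zpow_natCast, ← zpow_add, add_comm]

end Homeomorph

lemma localStableSet_apply {X : Type*} {d : X → X → ℝ} {f : X → X} {ε : ℝ} {x y : X}
    (hy : y ∈ localStableSet d f ε x) : f y ∈ localStableSet d f ε (f x) := fun n => by
  simpa only [Function.iterate_succ_apply] using hy (n + 1)

lemma nhds_hasBasis_of_dist_le {X : Type*} [PseudoMetricSpace X] {d : X → X → ℝ} {x : X}
    (hle : ∀ y, dist x y ≤ d x y) (hcont : Continuous (d x)) (hself : d x x = 0) :
    (𝓝 x).HasBasis (fun r : ℝ => 0 < r) (fun r => {y | d x y < r}) :=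
  Metric.nhds_basis_ball.to_hasBasis
    (fun r hr => ⟨r, hr, fun y hy => by
      rw [Metric.mem_ball, dist_comm]; exact (hle y).trans_lt hy⟩)
    (fun r hr => Metric.isOpen_iff.1 (isOpen_lt hcont continuous_const) x (by simpa [hself]))

noncomputable def adaptedRate (C lam σ : ℝ) (N : ℕ) : ℝ :=
  σ + (N + 1) * (C * lam ^ (N + 1) / σ ^ N)

lemma adaptedRate_pos {C lam σ : ℝ} (hσ : 0 < σ) (hC : 0 ≤ C) (hlam : 0 ≤ lam) (N : ℕ) :
    0 < adaptedRate C lam σ N := by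
  unfold adaptedRate
  positivity

lemma tendsto_adaptedRate (C : ℝ) {lam σ : ℝ} (hlam : 0 ≤ lam) (hlamσ : lam < σ) :
    Tendsto (adaptedRate C lam σ) atTop (𝓝 σ) := by
  have hσ : 0 < σ := hlam.trans_lt hlamσ
  have hr : lam / σ < 1 := (div_lt_one hσ).2 hlamσ
  have hrate : adaptedRate C lam σ =
      fun N : ℕ => σ + C * lam * (N * (lam / σ) ^ N + (lam / σ) ^ N) := by
    ext N
    rw [adaptedRate, div_pow]
    field_simp
    ring
  have hlim := (tendsto_self_mul_const_pow_of_lt_one (by positivity) hr).add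
    (tendsto_pow_atTop_nhds_zero_of_lt_one (by positivity) hr)
  rw [hrate]
  simpa using (hlim.const_mul (C * lam)).const_add σ

section AdaptedDist

variable {X : Type*} [PseudoMetricSpace X] (h : X ≃ₜ X) (σ : ℝ) (N : ℕ)

noncomputable def adaptedDist (x y : X) : ℝ :=
  ∑ n ∈ Icc (-N : ℤ) N, σ ^ n.natAbs * dist ((h ^ n) x) ((h ^ n) y)

variable {σ}

lemma adaptedDist_self (x : X) : adaptedDist h σ N x x = 0 := by
  simp [adaptedDist]

lemma adaptedDist_comm (x y : X) : adaptedDist h σ N x y = adaptedDist h σ N y x := by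
  simp only [adaptedDist, dist_comm]

lemma adaptedDist_nonneg (hσ : 0 ≤ σ) (x y : X) : 0 ≤ adaptedDist h σ N x y :=
  sum_nonneg fun _ _ => by positivity

lemma adaptedDist_triangle (hσ : 0 ≤ σ) (x y z : X) :
    adaptedDist h σ N x z ≤ adaptedDist h σ N x y + adaptedDist h σ N y z := by
  rw [adaptedDist, adaptedDist, adaptedDist, ← sum_add_distrib]
  gcongr with n
  rw [← mul_add]
  gcongr
  exact dist_triangle _ _ _

lemma pow_natAbs_mul_dist_le_adaptedDist (hσ : 0 ≤ σ) {n : ℤ} (hn : n ∈ Icc (-N : ℤ) N)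
    (x y : X) : σ ^ n.natAbs * dist ((h ^ n) x) ((h ^ n) y) ≤ adaptedDist h σ N x y :=
  single_le_sum (f := fun n : ℤ => σ ^ n.natAbs * dist ((h ^ n) x) ((h ^ n) y))
    (fun _ _ => by positivity) hn

lemma dist_le_adaptedDist (hσ : 0 ≤ σ) (x y : X) : dist x y ≤ adaptedDist h σ N x y := by
  simpa using pow_natAbs_mul_dist_le_adaptedDist h N hσ (n := 0) (by simp) x y

lemma continuous_adaptedDist (x : X) : Continuous (adaptedDist h σ N x) :=
  continuous_finsetSum _ fun n _ =>
    continuous_const.mul (continuous_const.dist (h ^ n).continuous)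

lemma adaptedDist_inv : adaptedDist h⁻¹ σ N = adaptedDist h σ N := by
  ext x y
  refine sum_nbij' (fun n => -n) (fun n => -n) ?_ ?_ (by simp) (by simp) ?_
  · intro n hn; simp only [mem_Icc] at hn ⊢; omega
  · intro n hn; simp only [mem_Icc] at hn ⊢; omega
  · intro n _; rw [inv_zpow', Int.natAbs_neg]

lemma adaptedDist_apply (x y : X) : adaptedDist h σ N (h x) (h y) =
    ∑ n ∈ Icc (-N : ℤ) N, σ ^ n.natAbs * dist ((h ^ (n + 1)) x) ((h ^ (n + 1)) y) := by
  simp only [adaptedDist, zpow_add_one, Homeomorph.mul_apply]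

end AdaptedDist

lemma adaptedDist_eq_zero_iff {X : Type*} [MetricSpace X] (h : X ≃ₜ X) {σ : ℝ} (N : ℕ)
    (hσ : 0 ≤ σ) {x y : X} : adaptedDist h σ N x y = 0 ↔ x = y :=
  ⟨fun h0 => dist_le_zero.1 (h0 ▸ dist_le_adaptedDist h N hσ x y),
    fun hxy => hxy ▸ adaptedDist_self h N x⟩

section Contraction

variable {X : Type*} [PseudoMetricSpace X] {h : X ≃ₜ X} {ε C lam σ : ℝ} {N : ℕ}

lemma mem_localStableSet_dist_of_adaptedDist (hσ : 0 < σ) {x y : X}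
    (hy : y ∈ localStableSet (adaptedDist h σ N) h (σ ^ N * ε) x) :
    (h ^ (-N : ℤ)) y ∈ localStableSet dist h ε ((h ^ (-N : ℤ)) x) := fun m => by
  have hm := (pow_natAbs_mul_dist_le_adaptedDist h N hσ.le (n := -N) (by simp)
    (h^[m] x) (h^[m] y)).trans (hy m)
  rw [Int.natAbs_neg, Int.natAbs_natCast, Homeomorph.zpow_iterate_apply,
    Homeomorph.zpow_iterate_apply] at hm
  rw [Homeomorph.iterate_zpow_apply, Homeomorph.iterate_zpow_apply]
  exact le_of_mul_le_mul_left hm (pow_pos hσ N)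

lemma dist_zpow_succ_le_adaptedDist (hσ : 0 < σ) (hC : 0 ≤ C) (hlam0 : 0 ≤ lam)
    (hlam1 : lam ≤ 1)
    (hstab : ∀ x y, y ∈ localStableSet dist h ε x →
      ∀ n : ℕ, dist (h^[n] x) (h^[n] y) ≤ C * lam ^ n * dist x y)
    {x y : X} (hpast : (h ^ (-N : ℤ)) y ∈ localStableSet dist h ε ((h ^ (-N : ℤ)) x)) (n : ℕ) :
    dist ((h ^ ((n : ℤ) + 1)) x) ((h ^ ((n : ℤ) + 1)) y) ≤
      C * lam ^ (N + 1) / σ ^ N * adaptedDist h σ N x y := by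
  have hAH := hstab _ _ hpast (n + 1 + N)
  rw [Homeomorph.iterate_zpow_apply, Homeomorph.iterate_zpow_apply,
    show ((n + 1 + N : ℕ) : ℤ) + -N = n + 1 by push_cast; ring] at hAH
  have hweight := pow_natAbs_mul_dist_le_adaptedDist h N hσ.le (n := -N) (by simp) x y
  rw [Int.natAbs_neg, Int.natAbs_natCast] at hweight
  calc _ ≤ C * lam ^ (n + 1 + N) * dist ((h ^ (-N : ℤ)) x) ((h ^ (-N : ℤ)) y) := hAH
    _ ≤ C * lam ^ (N + 1) * dist ((h ^ (-N : ℤ)) x) ((h ^ (-N : ℤ)) y) := by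
      gcongr ?_ * _
      exact mul_le_mul_of_nonneg_left (pow_le_pow_of_le_one hlam0 hlam1 (by omega)) hC
    _ = C * lam ^ (N + 1) / σ ^ N * (σ ^ N * dist ((h ^ (-N : ℤ)) x) ((h ^ (-N : ℤ)) y)) := by
      field_simp
    _ ≤ C * lam ^ (N + 1) / σ ^ N * adaptedDist h σ N x y := by gcongr

lemma adaptedDist_apply_le (hσ0 : 0 < σ) (hσ1 : σ ≤ 1) (hC : 0 ≤ C) (hlam0 : 0 ≤ lam)
    (hlam1 : lam ≤ 1)
    (hstab : ∀ x y, y ∈ localStableSet dist h ε x →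
      ∀ n : ℕ, dist (h^[n] x) (h^[n] y) ≤ C * lam ^ n * dist x y)
    {x y : X} (hpast : (h ^ (-N : ℤ)) y ∈ localStableSet dist h ε ((h ^ (-N : ℤ)) x)) :
    adaptedDist h σ N (h x) (h y) ≤ adaptedRate C lam σ N * adaptedDist h σ N x y := by
  set S := adaptedDist h σ N x y
  set e : ℤ → ℝ := fun n => dist ((h ^ n) x) ((h ^ n) y)
  have hsplit : Icc (-N : ℤ) N = Ico (-N : ℤ) 0 ∪ Icc 0 (N : ℤ) := by
    ext n; simp only [mem_union, mem_Icc, mem_Ico]; omega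
  have hdisj : Disjoint (Ico (-N : ℤ) 0) (Icc 0 N) :=
    disjoint_left.2 fun n h1 h2 => by simp only [mem_Icc, mem_Ico] at h1 h2; omega
  have hpast_le : ∑ n ∈ Ico (-N : ℤ) 0, σ ^ n.natAbs * e (n + 1) ≤ σ * S := by
    have hshift : ∀ n ∈ Ico (-N : ℤ) 0,
        σ ^ n.natAbs * e (n + 1) = σ * (σ ^ (n + 1).natAbs * e (n + 1)) := by
      intro n hn
      simp only [mem_Ico] at hn
      rw [← mul_assoc, ← pow_succ', show (n + 1).natAbs + 1 = n.natAbs by omega]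
    rw [sum_congr rfl hshift, ← mul_sum, sum_Ico_add' (fun n => σ ^ n.natAbs * e n)]
    gcongr
    refine sum_le_sum_of_subset_of_nonneg ?_ fun _ _ _ => by positivity
    intro n hn
    simp only [mem_Ico, mem_Icc] at hn ⊢
    omega
  have hfuture : ∀ n ∈ Icc (0 : ℤ) N,
      σ ^ n.natAbs * e (n + 1) ≤ C * lam ^ (N + 1) / σ ^ N * S := by
    intro n hn
    lift n to ℕ using (mem_Icc.1 hn).1
    exact (mul_le_of_le_one_left dist_nonneg (pow_le_one₀ hσ0.le hσ1)).trans
      (dist_zpow_succ_le_adaptedDist hσ0 hC hlam0 hlam1 hstab hpast n)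
  have hcard : #(Icc (0 : ℤ) N) = N + 1 := by simp
  rw [adaptedDist_apply, hsplit, sum_union hdisj]
  calc _ ≤ σ * S + ∑ n ∈ Icc (0 : ℤ) N, C * lam ^ (N + 1) / σ ^ N * S :=
        add_le_add hpast_le (sum_le_sum hfuture)
    _ = adaptedRate C lam σ N * S := by
      rw [sum_const, hcard, nsmul_eq_mul, adaptedRate]
      push_cast
      ring

lemma adaptedDist_iterate_le (hσ0 : 0 < σ) (hσ1 : σ ≤ 1) (hC : 0 ≤ C) (hlam0 : 0 ≤ lam)
    (hlam1 : lam ≤ 1)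
    (hstab : ∀ x y, y ∈ localStableSet dist h ε x →
      ∀ n : ℕ, dist (h^[n] x) (h^[n] y) ≤ C * lam ^ n * dist x y)
    {x y : X} (hy : y ∈ localStableSet (adaptedDist h σ N) h (σ ^ N * ε) x) (n : ℕ) :
    adaptedDist h σ N (h^[n] x) (h^[n] y) ≤
      adaptedRate C lam σ N ^ n * adaptedDist h σ N x y := by
  induction n generalizing x y with
  | zero => simp
  | succ n ih =>
    rw [Function.iterate_succ_apply, Function.iterate_succ_apply, pow_succ, mul_assoc]
    exact (ih (localStableSet_apply hy)).trans <| mul_le_mul_of_nonneg_left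
      (adaptedDist_apply_le hσ0 hσ1 hC hlam0 hlam1 hstab
        (mem_localStableSet_dist_of_adaptedDist hσ0 hy))
      (pow_nonneg (adaptedRate_pos hσ0 hC hlam0 N).le n)

theorem satisfiesAH1_adaptedDist (hσ0 : 0 < σ) (hσ1 : σ ≤ 1) (hC : 0 ≤ C) (hlam0 : 0 ≤ lam)
    (hlam1 : lam ≤ 1) (hAH1 : SatisfiesAH1 dist h h.symm ε C lam) :
    SatisfiesAH1 (adaptedDist h σ N) h h.symm (σ ^ N * ε) 1 (adaptedRate C lam σ N) := by
  refine ⟨fun x y hy n => ?_, fun x y hy n => ?_⟩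
  · rw [one_mul]
    exact adaptedDist_iterate_le hσ0 hσ1 hC hlam0 hlam1 hAH1.1 hy n
  · rw [one_mul, ← adaptedDist_inv]
    rw [← adaptedDist_inv] at hy
    exact adaptedDist_iterate_le (h := h⁻¹) hσ0 hσ1 hC hlam0 hlam1 hAH1.2 hy n

end Contraction

theorem exists_adapted_metric_AH1_general
    {X : Type*} [MetricSpace X] (h : X ≃ₜ X)
    (ε C lam : ℝ) (hε : 0 < ε) (hC : 0 < C) (hlam : lam ∈ Set.Ioo (0 : ℝ) 1)
    (hAH1 : SatisfiesAH1 dist (⇑h) (⇑h.symm) ε C lam) :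
    ∃ d' : X → X → ℝ,
      (∀ x y, 0 ≤ d' x y) ∧
      (∀ x y, d' x y = 0 ↔ x = y) ∧
      (∀ x y, d' x y = d' y x) ∧
      (∀ x y z, d' x z ≤ d' x y + d' y z) ∧
      (∀ x : X, (nhds x).HasBasis (fun ε₀ : ℝ => 0 < ε₀)
        (fun ε₀ => {y | d' x y < ε₀})) ∧
      ∃ ε' > 0, ∃ lam' ∈ Set.Ioo (0 : ℝ) 1,
        SatisfiesAH1 d' (⇑h) (⇑h.symm) ε' 1 lam' := by
  obtain ⟨hlam0, hlam1⟩ := hlam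
  obtain ⟨σ, hlamσ, hσ1⟩ := exists_between hlam1
  have hσ0 : 0 < σ := hlam0.trans hlamσ
  obtain ⟨N, hN⟩ :=
    ((tendsto_adaptedRate C hlam0.le hlamσ).eventually (gt_mem_nhds hσ1)).exists
  exact ⟨adaptedDist h σ N, adaptedDist_nonneg h N hσ0.le,
    fun _ _ => adaptedDist_eq_zero_iff h N hσ0.le, adaptedDist_comm h N,
    adaptedDist_triangle h N hσ0.le,
    fun x => nhds_hasBasis_of_dist_le (dist_le_adaptedDist h N hσ0.le x)
      (continuous_adaptedDist h N x) (adaptedDist_self h N x),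
    σ ^ N * ε, by positivity, adaptedRate C lam σ N,
    ⟨adaptedRate_pos hσ0 hC.le hlam0.le N, hN⟩,
    satisfiesAH1_adaptedDist hσ0 hσ1.le hC.le hlam0.le hlam1.le hAH1⟩

/-- Adapted metric: if a homeomorphism `h` of a compact metric space satisfies
(AH1) with constants `(ε, C, lam)`, then there is an equivalent metric `d'`
(a genuine metric whose balls form neighborhood bases for the original topology)
for which `h` satisfies (AH1) with constant `C = 1`. -/
theorem exists_adapted_metric_AH1
    {X : Type*} [MetricSpace X] [CompactSpace X] (h : X ≃ₜ X)
    (ε C lam : ℝ) (hε : 0 < ε) (hC : 0 < C) (hlam : lam ∈ Set.Ioo (0 : ℝ) 1)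
    (hAH1 : SatisfiesAH1 dist (⇑h) (⇑h.symm) ε C lam) :
    ∃ d' : X → X → ℝ,
      (∀ x y, 0 ≤ d' x y) ∧
      (∀ x y, d' x y = 0 ↔ x = y) ∧
      (∀ x y, d' x y = d' y x) ∧
      (∀ x y z, d' x z ≤ d' x y + d' y z) ∧
      (∀ x : X, (nhds x).HasBasis (fun ε₀ : ℝ => 0 < ε₀)
        (fun ε₀ => {y | d' x y < ε₀})) ∧
      ∃ ε' > 0, ∃ lam' ∈ Set.Ioo (0 : ℝ) 1,
        SatisfiesAH1 d' (⇑h) (⇑h.symm) ε' 1 lam' :=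
  exists_adapted_metric_AH1_general h ε C lam hε hC hlam hAH1
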